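/- For all integers k ≥ 1 and a ≥ 1, in K[B] one has B_ev^{(2k)} · B_ev^{(2a−1)} = [2k+2a−1 choose 2k] · ( B_ev^{(2k+2a−1)} + Σ_{ℓ=1}^{k} ( ∏_{m=1}^{ℓ} [2a−2m+2]·[2k−2m+2] / ( [2k+2a−2m+1]·[2m] ) ) · (qς)^{ℓ} · B_ev^{(2k+2a−2ℓ−1)} ). -/

import Mathlib

noncomputable section

open Polynomial Finset

abbrev Kq : Type := RatFunc ℚ

/-- The variable `q` in `ℚ(q)`. -/
def qq : Kq := RatFunc.X

/-- The quantum integer `[n] = (q^n - q^{-n})/(q - q^{-1})` for `n : ℤ`. -/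
def qint (n : ℤ) : Kq := (qq ^ n - qq ^ (-n)) / (qq - qq⁻¹)

/-- The quantum factorial `[n]! = ∏_{i=1}^n [i]`. -/
def qfact (n : ℕ) : Kq := ∏ i ∈ Finset.range n, qint ((i : ℤ) + 1)

/-- The quantum binomial `[n choose m] = [n]!/([m]!·[n-m]!)`. -/
def qbinom (n m : ℕ) : Kq := qfact n / (qfact m * qfact (n - m))

/-- The even ı-divided power `B_ev^{(n)}` in `K[B]`. -/
def BevP (ς : Kq) (n : ℕ) : Polynomial Kq :=
  if Even n then
    Polynomial.C (qfact n)⁻¹ *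
      ∏ j ∈ Finset.range (n / 2),
        ((Polynomial.X : Polynomial Kq) ^ 2 - Polynomial.C (qq * ς * (qint (2 * (j : ℤ))) ^ 2))
  else
    Polynomial.C (qfact n)⁻¹ *
      (Polynomial.X *
        ∏ j ∈ Finset.range (n / 2),
          ((Polynomial.X : Polynomial Kq) ^ 2 - Polynomial.C (qq * ς * (qint (2 * (j : ℤ) + 2)) ^ 2)))

/-- The odd ı-divided power `B_odd^{(n)}` in `K[B]`. -/
def BoddP (ς : Kq) (n : ℕ) : Polynomial Kq :=
  if Even n then
    Polynomial.C (qfact n)⁻¹ *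
      ∏ j ∈ Finset.range (n / 2),
        ((Polynomial.X : Polynomial Kq) ^ 2 - Polynomial.C (qq * ς * (qint (2 * (j : ℤ) + 1)) ^ 2))
  else
    Polynomial.C (qfact n)⁻¹ *
      (Polynomial.X *
        ∏ j ∈ Finset.range (n / 2),
          ((Polynomial.X : Polynomial Kq) ^ 2 - Polynomial.C (qq * ς * (qint (2 * (j : ℤ) + 1)) ^ 2)))

set_option maxHeartbeats 2000000

/-! ### Basic facts about `qq` and `qint` -/

lemma qq_ne_zero : qq ≠ 0 := RatFunc.X_ne_zero

lemma qq_pow_ne_one {m : ℕ} (hm : 0 < m) : (qq : Kq) ^ m ≠ 1 := by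
  intro h
  have : algebraMap (Polynomial ℚ) Kq (Polynomial.X ^ m) = algebraMap (Polynomial ℚ) Kq 1 := by
    simp only [map_pow, map_one, RatFunc.algebraMap_X]
    exact h
  have h2 := RatFunc.algebraMap_injective ℚ this
  have := congrArg (Polynomial.eval 0) h2
  simp [zero_pow hm.ne'] at this

lemma qq_zpow_ne_one {n : ℤ} (hn : n ≠ 0) : (qq : Kq) ^ n ≠ 1 := by
  rcases lt_or_gt_of_ne hn with h | h
  · intro he
    have : (qq : Kq) ^ (-n) = 1 := by
      rw [zpow_neg, he, inv_one]
    rw [show (-n) = ((-n).toNat : ℤ) by omega, zpow_natCast] at this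
    exact qq_pow_ne_one (by omega) this
  · intro he
    rw [show n = (n.toNat : ℤ) by omega, zpow_natCast] at he
    exact qq_pow_ne_one (by omega) he

lemma qsub_ne_zero : qq - qq⁻¹ ≠ 0 := by
  intro h
  have h1 : qq = qq⁻¹ := by linear_combination h
  have : (qq:Kq)^(2:ℕ) = 1 := by
    rw [pow_two]; nth_rewrite 2 [h1]; exact mul_inv_cancel₀ qq_ne_zero
  exact qq_pow_ne_one (by norm_num) this

lemma qint_ne_zero {n : ℤ} (hn : n ≠ 0) : qint n ≠ 0 := by
  unfold qint
  apply div_ne_zero _ qsub_ne_zero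
  intro h
  have : (qq:Kq) ^ (2*n) = 1 := by
    have h2 : (qq:Kq)^n = qq^(-n) := by linear_combination h
    have h3 : (qq:Kq)^(2*n) = qq^n * qq^n := by
      rw [two_mul, zpow_add₀ qq_ne_zero]
    rw [h3]; nth_rewrite 1 [h2]
    rw [← zpow_add₀ qq_ne_zero]; simp
  exact qq_zpow_ne_one (by omega) this

lemma qint_mul (x y : ℤ) : qint x * qint y * (qq - qq⁻¹)^2
    = qq^(x+y) - qq^(x-y) - qq^(y-x) + qq^(-x-y) := by
  unfold qint
  rw [div_mul_div_comm, pow_two, div_mul_cancel₀ _ (mul_ne_zero qsub_ne_zero qsub_ne_zero)]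
  rw [sub_mul, mul_sub, mul_sub, ← zpow_add₀ qq_ne_zero, ← zpow_add₀ qq_ne_zero,
    ← zpow_add₀ qq_ne_zero, ← zpow_add₀ qq_ne_zero]
  ring_nf

lemma qint_id2 (x y t : ℤ) :
    qint x * qint y = qint (x - t) * qint (y - t) + qint t * qint (x + y - t) := by
  apply mul_right_cancel₀ (pow_ne_zero 2 qsub_ne_zero)
  rw [add_mul, qint_mul, qint_mul, qint_mul]
  have e1 : x - t + (y - t) = x + y - 2*t := by ring
  have e2 : x - t - (y - t) = x - y := by ring
  have e3 : y - t - (x - t) = y - x := by ring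
  have e4 : -(x - t) - (y - t) = 2*t - (x+y) := by ring
  have e5 : t + (x + y - t) = x + y := by ring
  have e6 : t - (x + y - t) = 2*t - (x+y) := by ring
  have e7 : x + y - t - t = x + y - 2*t := by ring
  have e8 : -t - (x + y - t) = -x - y := by ring
  rw [e1, e2, e3, e4, e5, e6, e7, e8]
  ring

lemma qfact_succ (n : ℕ) : qfact (n+1) = qfact n * qint (n+1) := by
  unfold qfact
  rw [Finset.prod_range_succ]

lemma qfact_ne_zero (n : ℕ) : qfact n ≠ 0 := by
  unfold qfact
  apply Finset.prod_ne_zero_iff.mpr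
  intro i _
  exact qint_ne_zero (by omega)

lemma qint_zero : qint 0 = 0 := by
  unfold qint; simp

/-! ### Auxiliary polynomials -/

def Wp (ς : Kq) (n : ℕ) : Polynomial Kq :=
  Polynomial.X *
    ∏ j ∈ Finset.range n,
      ((Polynomial.X : Polynomial Kq) ^ 2 - Polynomial.C (qq * ς * (qint (2 * (j : ℤ) + 2)) ^ 2))

def Vp (ς : Kq) (n : ℕ) : Polynomial Kq :=
  ∏ j ∈ Finset.range n,
    ((Polynomial.X : Polynomial Kq) ^ 2 - Polynomial.C (qq * ς * (qint (2 * (j : ℤ))) ^ 2))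

lemma BevP_odd (ς : Kq) (n : ℕ) :
    BevP ς (2*n+1) = Polynomial.C (qfact (2*n+1))⁻¹ * Wp ς n := by
  unfold BevP Wp
  rw [if_neg (by simp [Nat.even_add_one, parity_simps])]
  rw [show (2*n+1)/2 = n by omega]

lemma BevP_even (ς : Kq) (n : ℕ) :
    BevP ς (2*n) = Polynomial.C (qfact (2*n))⁻¹ * Vp ς n := by
  unfold BevP Vp
  rw [if_pos (by exact even_two_mul n)]
  rw [show (2*n)/2 = n by omega]

lemma Vp_succ (ς : Kq) (k : ℕ) :
    Vp ς (k+1) = Vp ς k * ((Polynomial.X:Polynomial Kq)^2 - Polynomial.C (qq * ς * (qint (2*(k:ℤ)))^2)) := by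
  unfold Vp
  rw [Finset.prod_range_succ]

lemma Wp_rel (ς : Kq) (n : ℕ) :
    (Polynomial.X:Polynomial Kq)^2 * Wp ς n
      = Wp ς (n+1) + Polynomial.C (qq * ς * (qint (2*(n:ℤ)+2))^2) * Wp ς n := by
  unfold Wp
  rw [Finset.prod_range_succ]
  ring

/-! ### The coefficients -/

def Pc (b k ℓ : ℕ) : Kq :=
  ∏ m ∈ Finset.Icc 1 ℓ,
    (qint (2*(b:ℤ) - 2*(m:ℤ) + 4) * qint (2*(k:ℤ) - 2*(m:ℤ) + 2)) /
      (qint (2*(k:ℤ) + 2*(b:ℤ) - 2*(m:ℤ) + 3) * qint (2*(m:ℤ)))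

def Gc (ς : Kq) (b k ℓ : ℕ) : Kq :=
  qfact (2*k+2*b+1) / (qfact (2*k) * qfact (2*(k+b-ℓ)+1)) * Pc b k ℓ * (qq*ς)^ℓ

lemma Pc_succ (b k ℓ : ℕ) :
    Pc b k (ℓ+1) = Pc b k ℓ *
      ((qint (2*(b:ℤ) - 2*(ℓ:ℤ) + 2) * qint (2*(k:ℤ) - 2*(ℓ:ℤ))) /
        (qint (2*(k:ℤ) + 2*(b:ℤ) - 2*(ℓ:ℤ) + 1) * qint (2*(ℓ:ℤ) + 2))) := by
  unfold Pc
  rw [Finset.prod_Icc_succ_top (Nat.succ_le_succ (Nat.zero_le ℓ))]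
  rw [show (2*(b:ℤ) - 2*((ℓ+1:ℕ):ℤ) + 4) = 2*(b:ℤ) - 2*(ℓ:ℤ) + 2 by push_cast; ring,
    show (2*(k:ℤ) - 2*((ℓ+1:ℕ):ℤ) + 2) = 2*(k:ℤ) - 2*(ℓ:ℤ) by push_cast; ring,
    show (2*(k:ℤ) + 2*(b:ℤ) - 2*((ℓ+1:ℕ):ℤ) + 3) = 2*(k:ℤ) + 2*(b:ℤ) - 2*(ℓ:ℤ) + 1 by push_cast; ring,
    show (2*((ℓ+1:ℕ):ℤ)) = 2*(ℓ:ℤ) + 2 by push_cast; ring]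

lemma Pc_top (b k : ℕ) : Pc b k (k+1) = 0 := by
  unfold Pc
  apply Finset.prod_eq_zero (i := k+1) (by simp)
  have : qint (2*(k:ℤ) - 2*((k+1:ℕ):ℤ) + 2) = 0 := by
    rw [show 2*(k:ℤ) - 2*((k+1:ℕ):ℤ) + 2 = 0 by push_cast; ring]
    exact qint_zero
  rw [this]
  simp

lemma Gc_top (ς : Kq) (b k : ℕ) : Gc ς b k (k+1) = 0 := by
  unfold Gc
  rw [Pc_top]
  ring

lemma Gc_zero (ς : Kq) (b k : ℕ) : Gc ς b k 0 = (qfact (2*k))⁻¹ := by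
  unfold Gc Pc
  simp only [Nat.sub_zero, Finset.Icc_self]
  rw [show Finset.Icc 1 0 = (∅ : Finset ℕ) by rfl]
  simp only [Finset.prod_empty, pow_zero]
  rw [div_eq_mul_inv, mul_inv]
  rw [show 2*(k+b)+1 = 2*k+2*b+1 by ring]
  field_simp [qfact_ne_zero]

lemma Pc_R1 (b k : ℕ) : ∀ ℓ : ℕ,
    Pc b (k+1) ℓ * (qint (2*(k:ℤ) - 2*(ℓ:ℤ) + 2) * qint (2*(k:ℤ) + 2*(b:ℤ) + 3))
      = Pc b k ℓ * (qint (2*(k:ℤ) + 2) * qint (2*(k:ℤ) + 2*(b:ℤ) - 2*(ℓ:ℤ) + 3)) := by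
  intro ℓ
  induction ℓ with
  | zero =>
      simp only [Pc, Finset.Icc_self, show Finset.Icc 1 0 = (∅ : Finset ℕ) by rfl,
        Finset.prod_empty, Nat.cast_zero]
      ring_nf
  | succ ℓ IH =>
      rw [Pc_succ, Pc_succ]
      rw [show (2*((k+1:ℕ):ℤ) - 2*(ℓ:ℤ)) = 2*(k:ℤ) - 2*(ℓ:ℤ) + 2 by push_cast; ring,
        show (2*((k+1:ℕ):ℤ) + 2*(b:ℤ) - 2*(ℓ:ℤ) + 1) = 2*(k:ℤ) + 2*(b:ℤ) - 2*(ℓ:ℤ) + 3 by push_cast; ring,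
        show (2*((ℓ+1:ℕ):ℤ)) = 2*(ℓ:ℤ)+2 by push_cast; ring,
        show (2*(k:ℤ) - (2*(ℓ:ℤ) + 2) + 2) = 2*(k:ℤ) - 2*(ℓ:ℤ) by ring,
        show (2*(k:ℤ) + 2*(b:ℤ) - (2*(ℓ:ℤ) + 2) + 3) = 2*(k:ℤ) + 2*(b:ℤ) - 2*(ℓ:ℤ) + 1 by ring]
      have h1 : qint (2*(k:ℤ) + 2*(b:ℤ) - 2*(ℓ:ℤ) + 3) ≠ 0 := qint_ne_zero (by omega)
      have h2 : qint (2*(k:ℤ) + 2*(b:ℤ) - 2*(ℓ:ℤ) + 1) ≠ 0 := qint_ne_zero (by omega)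
      have h3 : qint (2*(ℓ:ℤ) + 2) ≠ 0 := qint_ne_zero (by omega)
      field_simp
      linear_combination (qint (2*(b:ℤ)-2*(ℓ:ℤ)+2) * qint (2*(k:ℤ)-2*(ℓ:ℤ))) * IH

lemma Gc_R1 (ς : Kq) (b k ℓ : ℕ) (hℓ : ℓ ≤ k) :
    Gc ς b (k+1) (ℓ+1) * (qint (2*(k:ℤ)+1) * qint (2*(ℓ:ℤ)+2))
      = Gc ς b k ℓ * (qq*ς) * (qint (2*(k:ℤ)+2*(b:ℤ)+2) * qint (2*(b:ℤ)-2*(ℓ:ℤ)+2)) := by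
  have hc1 : qint (2*(k:ℤ) - 2*(ℓ:ℤ) + 2) ≠ 0 := qint_ne_zero (by omega)
  have hc2 : qint (2*(k:ℤ) + 2*(b:ℤ) + 3) ≠ 0 := qint_ne_zero (by omega)
  have hPk1 : Pc b (k+1) ℓ
      = Pc b k ℓ * (qint (2*(k:ℤ) + 2) * qint (2*(k:ℤ) + 2*(b:ℤ) - 2*(ℓ:ℤ) + 3))
        / (qint (2*(k:ℤ) - 2*(ℓ:ℤ) + 2) * qint (2*(k:ℤ) + 2*(b:ℤ) + 3)) := by
    rw [eq_div_iff (mul_ne_zero hc1 hc2)]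
    linear_combination Pc_R1 b k ℓ
  have hFa : qfact (2*(k+1)+2*b+1)
      = qfact (2*k+2*b+1) * qint (2*(k:ℤ)+2*(b:ℤ)+2) * qint (2*(k:ℤ)+2*(b:ℤ)+3) := by
    rw [show 2*(k+1)+2*b+1 = (2*k+2*b+1)+1+1 by ring, qfact_succ, qfact_succ]
    rw [show ((2*k+2*b+1:ℕ):ℤ)+1 = 2*(k:ℤ)+2*(b:ℤ)+2 by push_cast; ring,
      show ((2*k+2*b+1+1:ℕ):ℤ)+1 = 2*(k:ℤ)+2*(b:ℤ)+3 by push_cast; ring]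
  have hFb : qfact (2*(k+1)) = qfact (2*k) * qint (2*(k:ℤ)+1) * qint (2*(k:ℤ)+2) := by
    rw [show 2*(k+1) = (2*k)+1+1 by ring, qfact_succ, qfact_succ]
    rw [show ((2*k:ℕ):ℤ)+1 = 2*(k:ℤ)+1 by push_cast; ring,
      show ((2*k+1:ℕ):ℤ)+1 = 2*(k:ℤ)+2 by push_cast; ring]
  have i3 : (k+1)+b-(ℓ+1) = k+b-ℓ := by omega
  unfold Gc
  rw [Pc_succ, hPk1, hFa, hFb, i3]
  rw [show (2*((k+1:ℕ):ℤ) - 2*(ℓ:ℤ)) = 2*(k:ℤ) - 2*(ℓ:ℤ) + 2 by push_cast; ring,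
    show (2*((k+1:ℕ):ℤ) + 2*(b:ℤ) - 2*(ℓ:ℤ) + 1) = 2*(k:ℤ) + 2*(b:ℤ) - 2*(ℓ:ℤ) + 3 by push_cast; ring]
  have h1 : qint (2*(k:ℤ) + 2*(b:ℤ) - 2*(ℓ:ℤ) + 3) ≠ 0 := qint_ne_zero (by omega)
  have h3 : qint (2*(ℓ:ℤ) + 2) ≠ 0 := qint_ne_zero (by omega)
  have h4 : qint (2*(k:ℤ)+1) ≠ 0 := qint_ne_zero (by omega)
  have h5 : qint (2*(k:ℤ)+2) ≠ 0 := qint_ne_zero (by omega)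
  have h6 := qfact_ne_zero (2*k)
  have h7 := qfact_ne_zero (2*k+2*b+1)
  have h8 := qfact_ne_zero (2*(k+b-ℓ)+1)
  ring_nf at hc1 hc2 h1 h3 h4 h5 ⊢
  have e1 : qint (3 + (k:ℤ)*2 + ((b:ℤ)*2 - (ℓ:ℤ)*2)) ≠ 0 := qint_ne_zero (by omega)
  have e2 : qint (2 + ((k:ℤ)*2 - (ℓ:ℤ)*2)) ≠ 0 := qint_ne_zero (by omega)
  have e3 : qint (3 + (k:ℤ)*2 + (b:ℤ)*2) ≠ 0 := qint_ne_zero (by omega)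
  have e4 : qint (1 + (k:ℤ)*2) ≠ 0 := qint_ne_zero (by omega)
  have e5 : qint (2 + (k:ℤ)*2) ≠ 0 := qint_ne_zero (by omega)
  have e6 : qint (2 + (ℓ:ℤ)*2) ≠ 0 := qint_ne_zero (by omega)
  have e7 : qfact (k*2) ≠ 0 := qfact_ne_zero _
  have e8 : qfact (1 + (k+b-ℓ)*2) ≠ 0 := qfact_ne_zero _
  field_simp [e1, e2, e3, e4, e5, e6, e7, e8]

lemma Gc_R2 (ς : Kq) (b k ℓ : ℕ) (hℓ : ℓ + 1 ≤ k) :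
    Gc ς b k (ℓ+1) * qint (2*(ℓ:ℤ)+2)
      = Gc ς b k ℓ * (qq*ς) *
          (qint (2*(k:ℤ)+2*(b:ℤ)-2*(ℓ:ℤ)) * qint (2*(b:ℤ)-2*(ℓ:ℤ)+2) * qint (2*(k:ℤ)-2*(ℓ:ℤ))) := by
  obtain ⟨n, hn⟩ : ∃ n, k+b-ℓ = n+1 := ⟨k+b-ℓ-1, by omega⟩
  have i1 : k+b-(ℓ+1) = n := by omega
  have hF : qfact (2*(k+b-ℓ)+1)
      = qfact (2*n+1) * qint (2*(k:ℤ)+2*(b:ℤ)-2*(ℓ:ℤ)) * qint (2*(k:ℤ)+2*(b:ℤ)-2*(ℓ:ℤ)+1) := by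
    rw [show 2*(k+b-ℓ)+1 = (2*n+1)+1+1 by omega, qfact_succ, qfact_succ]
    rw [show ((2*n+1:ℕ):ℤ)+1 = 2*(k:ℤ)+2*(b:ℤ)-2*(ℓ:ℤ) by push_cast; omega,
      show ((2*n+1+1:ℕ):ℤ)+1 = 2*(k:ℤ)+2*(b:ℤ)-2*(ℓ:ℤ)+1 by push_cast; omega]
  unfold Gc
  rw [Pc_succ, i1, hF]
  have h1 : qint (2*(k:ℤ) + 2*(b:ℤ) - 2*(ℓ:ℤ) + 1) ≠ 0 := qint_ne_zero (by omega)
  have h3 : qint (2*(ℓ:ℤ) + 2) ≠ 0 := qint_ne_zero (by omega)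
  have h6 := qfact_ne_zero (2*k)
  have h7 := qfact_ne_zero (2*k+2*b+1)
  have h8 := qfact_ne_zero (2*n+1)
  have h9 : qint (2*(k:ℤ)+2*(b:ℤ)-2*(ℓ:ℤ)) ≠ 0 := qint_ne_zero (by omega)
  ring_nf at h1 h3 h9 ⊢
  have e1 : qint (1 + ((b:ℤ)*2 - (ℓ:ℤ)*2) + (k:ℤ)*2) ≠ 0 := qint_ne_zero (by omega)
  have e2 : qint ((b:ℤ)*2 - (ℓ:ℤ)*2 + (k:ℤ)*2) ≠ 0 := qint_ne_zero (by omega)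
  have e3 : qint (2 + (ℓ:ℤ)*2) ≠ 0 := qint_ne_zero (by omega)
  have e4 : qfact (k*2) ≠ 0 := qfact_ne_zero _
  have e5 : qfact (1 + n*2) ≠ 0 := qfact_ne_zero _
  field_simp [e1, e2, e3, e4, e5]

lemma Gc_CI0 (ς : Kq) (b k : ℕ) :
    qint (2*(k:ℤ)+1) * qint (2*(k:ℤ)+2) * Gc ς b (k+1) 0 = Gc ς b k 0 := by
  rw [Gc_zero, Gc_zero]
  have h : qfact (2*(k+1)) = qfact (2*k) * qint (2*(k:ℤ)+1) * qint (2*(k:ℤ)+2) := by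
    rw [show 2*(k+1) = (2*k+1)+1 by ring, qfact_succ, qfact_succ]
    push_cast
    ring_nf
  rw [h]
  field_simp [qfact_ne_zero, qint_ne_zero (show 2*(k:ℤ)+1 ≠ 0 by omega),
    qint_ne_zero (show 2*(k:ℤ)+2 ≠ 0 by omega)]

lemma Gc_CIs (ς : Kq) (b k ℓ : ℕ) (hℓ : ℓ ≤ k) :
    qint (2*(k:ℤ)+1) * qint (2*(k:ℤ)+2) * Gc ς b (k+1) (ℓ+1)
      = Gc ς b k (ℓ+1)
        + (qq*ς) * (qint (2*(k:ℤ)+2*(b:ℤ)-2*(ℓ:ℤ)+2)^2 - qint (2*(k:ℤ))^2) * Gc ς b k ℓ := by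
  have hΔ := qint_id2 (2*(k:ℤ)+2*(b:ℤ)-2*(ℓ:ℤ)+2) (2*(k:ℤ)+2*(b:ℤ)-2*(ℓ:ℤ)+2) (2*(b:ℤ)-2*(ℓ:ℤ)+2)
  rw [show (2*(k:ℤ)+2*(b:ℤ)-2*(ℓ:ℤ)+2 - (2*(b:ℤ)-2*(ℓ:ℤ)+2)) = 2*(k:ℤ) by ring,
    show (2*(k:ℤ)+2*(b:ℤ)-2*(ℓ:ℤ)+2 + (2*(k:ℤ)+2*(b:ℤ)-2*(ℓ:ℤ)+2) - (2*(b:ℤ)-2*(ℓ:ℤ)+2))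
      = 4*(k:ℤ)+2*(b:ℤ)-2*(ℓ:ℤ)+2 by ring] at hΔ
  rcases eq_or_lt_of_le hℓ with rfl | hlt
  · rw [Gc_top]
    have hGR1 := Gc_R1 ς b ℓ ℓ le_rfl
    have hΔ2 := qint_id2 (2*(ℓ:ℤ)+2*(b:ℤ)-2*(ℓ:ℤ)+2) (2*(ℓ:ℤ)+2*(b:ℤ)-2*(ℓ:ℤ)+2) (2*(b:ℤ)-2*(ℓ:ℤ)+2)
    rw [show (2*(ℓ:ℤ)+2*(b:ℤ)-2*(ℓ:ℤ)+2 - (2*(b:ℤ)-2*(ℓ:ℤ)+2)) = 2*(ℓ:ℤ) by ring,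
      show (2*(ℓ:ℤ)+2*(b:ℤ)-2*(ℓ:ℤ)+2 + (2*(ℓ:ℤ)+2*(b:ℤ)-2*(ℓ:ℤ)+2) - (2*(b:ℤ)-2*(ℓ:ℤ)+2))
        = 2*(ℓ:ℤ)+2*(b:ℤ)+2 by ring] at hΔ2
    linear_combination hGR1 - (qq*ς)*(Gc ς b ℓ ℓ)*hΔ2
  · have hGR1 := Gc_R1 ς b k ℓ hℓ
    have hGR2 := Gc_R2 ς b k ℓ hlt
    have h3 : qint (2*(ℓ:ℤ)+2) ≠ 0 := qint_ne_zero (by omega)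
    apply mul_right_cancel₀ h3
    have hKey := qint_id2 (2*(k:ℤ)+2*(b:ℤ)+2) (2*(k:ℤ)+2) (2*(ℓ:ℤ)+2)
    rw [show (2*(k:ℤ)+2*(b:ℤ)+2 - (2*(ℓ:ℤ)+2)) = 2*(k:ℤ)+2*(b:ℤ)-2*(ℓ:ℤ) by ring,
      show (2*(k:ℤ)+2 - (2*(ℓ:ℤ)+2)) = 2*(k:ℤ)-2*(ℓ:ℤ) by ring,
      show (2*(k:ℤ)+2*(b:ℤ)+2 + (2*(k:ℤ)+2) - (2*(ℓ:ℤ)+2)) = 4*(k:ℤ)+2*(b:ℤ)-2*(ℓ:ℤ)+2 by ring] at hKey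
    linear_combination qint (2*(k:ℤ)+2)*hGR1 - hGR2
      - (qq*ς)*(Gc ς b k ℓ)*qint (2*(ℓ:ℤ)+2)*hΔ
      + (qq*ς)*(Gc ς b k ℓ)*qint (2*(b:ℤ)-2*(ℓ:ℤ)+2)*hKey

lemma qfact_zero : qfact 0 = 1 := by simp [qfact]

lemma lemA (ς : Kq) (b : ℕ) : ∀ k : ℕ,
    Polynomial.C (qfact (2*k))⁻¹ * Vp ς k * Wp ς b
      = ∑ ℓ ∈ Finset.range (k+1), Polynomial.C (Gc ς b k ℓ) * Wp ς (k+b-ℓ) := by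
  intro k
  induction k with
  | zero =>
      rw [Finset.sum_range_one, Gc_zero]
      simp [Vp, qfact_zero]
  | succ k IH =>
      have hu1 : qint (2*(k:ℤ)+1) ≠ 0 := qint_ne_zero (by omega)
      have hu2 : qint (2*(k:ℤ)+2) ≠ 0 := qint_ne_zero (by omega)
      have hC : (Polynomial.C (qint (2*(k:ℤ)+1) * qint (2*(k:ℤ)+2)) : Polynomial Kq) ≠ 0 :=
        Polynomial.C_ne_zero.mpr (mul_ne_zero hu1 hu2)
      apply mul_left_cancel₀ hC
      have hFb : qfact (2*(k+1)) = qfact (2*k) * qint (2*(k:ℤ)+1) * qint (2*(k:ℤ)+2) := by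
        rw [show 2*(k+1) = (2*k)+1+1 by ring, qfact_succ, qfact_succ]
        rw [show ((2*k:ℕ):ℤ)+1 = 2*(k:ℤ)+1 by push_cast; ring,
          show ((2*k+1:ℕ):ℤ)+1 = 2*(k:ℤ)+2 by push_cast; ring]
      have hs : (qint (2*(k:ℤ)+1) * qint (2*(k:ℤ)+2)) * (qfact (2*(k+1)))⁻¹ = (qfact (2*k))⁻¹ := by
        rw [hFb]
        rw [show qfact (2*k) * qint (2*(k:ℤ)+1) * qint (2*(k:ℤ)+2)
            = (qint (2*(k:ℤ)+1) * qint (2*(k:ℤ)+2)) * qfact (2*k) by ring]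
        rw [mul_inv, ← mul_assoc, mul_inv_cancel₀ (mul_ne_zero hu1 hu2), one_mul]
      have hE12 : Polynomial.C (qint (2*(k:ℤ)+1) * qint (2*(k:ℤ)+2)) * (Polynomial.C (qfact (2*(k+1)))⁻¹ * Vp ς (k+1) * Wp ς b)
          = ∑ ℓ ∈ Finset.range (k+1),
              (Polynomial.C (Gc ς b k ℓ) * Wp ς (k+b-ℓ+1)
                + Polynomial.C (Gc ς b k ℓ) * Polynomial.C (qq*ς) *
                    ((Polynomial.C (qint (2*(k:ℤ)+2*(b:ℤ)-2*(ℓ:ℤ)+2)))^2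
                      - (Polynomial.C (qint (2*(k:ℤ))))^2) * Wp ς (k+b-ℓ)) := by
        calc Polynomial.C (qint (2*(k:ℤ)+1) * qint (2*(k:ℤ)+2)) * (Polynomial.C (qfact (2*(k+1)))⁻¹ * Vp ς (k+1) * Wp ς b)
            = Polynomial.C ((qint (2*(k:ℤ)+1) * qint (2*(k:ℤ)+2)) * (qfact (2*(k+1)))⁻¹) *
                (Vp ς k * ((Polynomial.X:Polynomial Kq)^2
                  - Polynomial.C (qq * ς * (qint (2*(k:ℤ)))^2))) * Wp ς b := by
              rw [Vp_succ]; simp only [map_mul]; ring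
          _ = Polynomial.C ((qfact (2*k))⁻¹) *
                (Vp ς k * ((Polynomial.X:Polynomial Kq)^2
                  - Polynomial.C (qq * ς * (qint (2*(k:ℤ)))^2))) * Wp ς b := by rw [hs]
          _ = (Polynomial.C (qfact (2*k))⁻¹ * Vp ς k * Wp ς b) *
                ((Polynomial.X:Polynomial Kq)^2 - Polynomial.C (qq * ς * (qint (2*(k:ℤ)))^2)) := by
              ring
          _ = (∑ ℓ ∈ Finset.range (k+1), Polynomial.C (Gc ς b k ℓ) * Wp ς (k+b-ℓ)) *
                ((Polynomial.X:Polynomial Kq)^2 - Polynomial.C (qq * ς * (qint (2*(k:ℤ)))^2)) := by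
              rw [IH]
          _ = _ := by
              rw [Finset.sum_mul]
              apply Finset.sum_congr rfl
              intro ℓ hm
              have hk : ℓ ≤ k := Nat.lt_succ_iff.mp (Finset.mem_range.mp hm)
              have hw := Wp_rel ς (k+b-ℓ)
              rw [show (2*((k+b-ℓ:ℕ):ℤ)+2) = 2*(k:ℤ)+2*(b:ℤ)-2*(ℓ:ℤ)+2 by omega] at hw
              simp only [map_mul, map_pow] at hw ⊢
              linear_combination (Polynomial.C (Gc ς b k ℓ)) * hw
      rw [hE12]
      -- now handle the right-hand side
      rw [Finset.mul_sum]
      rw [Finset.sum_range_succ' (fun ℓ => Polynomial.C (qint (2*(k:ℤ)+1) * qint (2*(k:ℤ)+2)) * (Polynomial.C (Gc ς b (k+1) ℓ) * Wp ς (k+1+b-ℓ))) (k+1)]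
      have hB : ∑ ℓ ∈ Finset.range (k+1),
            Polynomial.C (qint (2*(k:ℤ)+1) * qint (2*(k:ℤ)+2)) * (Polynomial.C (Gc ς b (k+1) (ℓ+1)) * Wp ς (k+1+b-(ℓ+1)))
          = ∑ ℓ ∈ Finset.range (k+1),
              (Polynomial.C (Gc ς b k (ℓ+1)) * Wp ς (k+b-ℓ)
                + Polynomial.C (Gc ς b k ℓ) * Polynomial.C (qq*ς) *
                    ((Polynomial.C (qint (2*(k:ℤ)+2*(b:ℤ)-2*(ℓ:ℤ)+2)))^2
                      - (Polynomial.C (qint (2*(k:ℤ))))^2) * Wp ς (k+b-ℓ)) := by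
        apply Finset.sum_congr rfl
        intro ℓ hm
        have hk : ℓ ≤ k := Nat.lt_succ_iff.mp (Finset.mem_range.mp hm)
        rw [show k+1+b-(ℓ+1) = k+b-ℓ by omega]
        have hci := congrArg Polynomial.C (Gc_CIs ς b k ℓ hk)
        simp only [map_mul, map_add, map_sub, map_pow] at hci ⊢
        linear_combination Wp ς (k+b-ℓ) * hci
      have hB0 : Polynomial.C (qint (2*(k:ℤ)+1) * qint (2*(k:ℤ)+2)) * (Polynomial.C (Gc ς b (k+1) 0) * Wp ς (k+1+b-0))
          = Polynomial.C (Gc ς b k 0) * Wp ς (k+b+1) := by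
        rw [show k+1+b-0 = k+b+1 by omega]
        have hci := congrArg Polynomial.C (Gc_CI0 ς b k)
        simp only [map_mul] at hci ⊢
        linear_combination Wp ς (k+b+1) * hci
      rw [hB, hB0]
      have hA : ∑ ℓ ∈ Finset.range (k+1), Polynomial.C (Gc ς b k ℓ) * Wp ς (k+b-ℓ+1)
          = (∑ ℓ ∈ Finset.range (k+1), Polynomial.C (Gc ς b k (ℓ+1)) * Wp ς (k+b-ℓ))
              + Polynomial.C (Gc ς b k 0) * Wp ς (k+b+1) := by
        rw [Finset.sum_range_succ' (fun ℓ => Polynomial.C (Gc ς b k ℓ) * Wp ς (k+b-ℓ+1)) k]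
        simp only [Nat.sub_zero]
        rw [Finset.sum_range_succ (fun ℓ => Polynomial.C (Gc ς b k (ℓ+1)) * Wp ς (k+b-ℓ)) k]
        rw [Gc_top]
        simp only [map_zero, zero_mul, add_zero]
        congr 1
        apply Finset.sum_congr rfl
        intro ℓ hm
        have hk : ℓ < k := Finset.mem_range.mp hm
        rw [show k+b-(ℓ+1)+1 = k+b-ℓ by omega]
      rw [Finset.sum_add_distrib, hA, Finset.sum_add_distrib]
      ring

/-- Multiplication formula `B_ev^{(2k)} B_ev^{(2a-1)}`. -/
theorem Bev_mul_even_odd (ς : Kq) (hς : ς ≠ 0) (k a : ℕ) (hk : 1 ≤ k) (ha : 1 ≤ a) :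
    BevP ς (2 * k) * BevP ς (2 * a - 1) =
    Polynomial.C (qbinom (2 * k + 2 * a - 1) (2 * k)) *
      (BevP ς (2 * k + 2 * a - 1) +
        ∑ ℓ ∈ Finset.Icc 1 k,
          Polynomial.C ((∏ m ∈ Finset.Icc 1 ℓ,
              (qint (2 * (a : ℤ) - 2 * (m : ℤ) + 2) * qint (2 * (k : ℤ) - 2 * (m : ℤ) + 2)) /
                (qint (2 * (k : ℤ) + 2 * (a : ℤ) - 2 * (m : ℤ) + 1) * qint (2 * (m : ℤ)))) *
            (qq * ς) ^ ℓ) *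
          BevP ς (2 * k + 2 * a - 2 * ℓ - 1)) := by
  obtain ⟨b, rfl⟩ : ∃ b, a = b+1 := ⟨a-1, by omega⟩
  rw [show 2*(b+1)-1 = 2*b+1 by omega, show 2*k+2*(b+1)-1 = 2*(k+b)+1 by omega]
  rw [BevP_even, BevP_odd, BevP_odd]
  have hcalc : Polynomial.C (qfact (2*k))⁻¹ * Vp ς k * (Polynomial.C (qfact (2*b+1))⁻¹ * Wp ς b)
      = ∑ ℓ ∈ Finset.range (k+1),
          Polynomial.C ((qfact (2*b+1))⁻¹ * Gc ς b k ℓ) * Wp ς (k+b-ℓ) := by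
    calc Polynomial.C (qfact (2*k))⁻¹ * Vp ς k * (Polynomial.C (qfact (2*b+1))⁻¹ * Wp ς b)
        = Polynomial.C ((qfact (2*b+1))⁻¹) * (Polynomial.C (qfact (2*k))⁻¹ * Vp ς k * Wp ς b) := by
          ring
      _ = Polynomial.C ((qfact (2*b+1))⁻¹) *
            ∑ ℓ ∈ Finset.range (k+1), Polynomial.C (Gc ς b k ℓ) * Wp ς (k+b-ℓ) := by
          rw [lemA]
      _ = _ := by
          rw [Finset.mul_sum]
          apply Finset.sum_congr rfl
          intro ℓ _
          simp only [map_mul]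
          ring
  rw [hcalc]
  rw [Finset.sum_range_succ'
    (fun ℓ => Polynomial.C ((qfact (2*b+1))⁻¹ * Gc ς b k ℓ) * Wp ς (k+b-ℓ)) k]
  rw [mul_add, Finset.mul_sum]
  rw [← Finset.Ico_add_one_right_eq_Icc, Finset.sum_Ico_eq_sum_range]
  rw [add_comm]
  congr 1
  · -- constant terms
    simp only [Nat.sub_zero]
    have hsc : (qfact (2*b+1))⁻¹ * Gc ς b k 0
        = qbinom (2*(k+b)+1) (2*k) * (qfact (2*(k+b)+1))⁻¹ := by
      rw [Gc_zero]
      unfold qbinom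
      rw [show 2*(k+b)+1-2*k = 2*b+1 by omega, show 2*(k+b)+1 = 2*k+2*b+1 by omega]
      field_simp
      rw [div_eq_div_iff (mul_ne_zero (qfact_ne_zero _) (qfact_ne_zero _))
        (mul_ne_zero (mul_ne_zero (qfact_ne_zero _) (qfact_ne_zero _)) (qfact_ne_zero _))]
      ring
    have := congrArg Polynomial.C hsc
    simp only [map_mul] at this ⊢
    linear_combination (Wp ς (k+b)) * this
  · -- the sums
    apply Finset.sum_congr (by norm_num)
    intro i hi
    have hik : i < k := by
      have := Finset.mem_range.mp hi
      omega
    rw [show 2*k+2*(b+1)-2*(1+i)-1 = 2*(k+b-(i+1))+1 by omega, BevP_odd]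
    have hPc : (∏ m ∈ Finset.Icc 1 (1+i),
        (qint (2 * ((b+1:ℕ) : ℤ) - 2 * (m : ℤ) + 2) * qint (2 * (k : ℤ) - 2 * (m : ℤ) + 2)) /
          (qint (2 * (k : ℤ) + 2 * ((b+1:ℕ) : ℤ) - 2 * (m : ℤ) + 1) * qint (2 * (m : ℤ))))
        = Pc b k (1+i) := by
      unfold Pc
      apply Finset.prod_congr rfl
      intro m _
      rw [show (2 * ((b+1:ℕ) : ℤ) - 2 * (m : ℤ) + 2) = 2*(b:ℤ) - 2*(m:ℤ) + 4 by push_cast; ring,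
        show (2 * (k : ℤ) + 2 * ((b+1:ℕ) : ℤ) - 2 * (m : ℤ) + 1) = 2*(k:ℤ) + 2*(b:ℤ) - 2*(m:ℤ) + 3 by push_cast; ring]
    rw [hPc]
    have hsc : (qfact (2*b+1))⁻¹ * Gc ς b k (i+1)
        = qbinom (2*(k+b)+1) (2*k) * (Pc b k (1+i) * (qq*ς)^(1+i)) *
            (qfact (2*(k+b-(i+1))+1))⁻¹ := by
      unfold Gc qbinom
      rw [show 2*(k+b)+1-2*k = 2*b+1 by omega, show 2*(k+b)+1 = 2*k+2*b+1 by omega,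
        show 1+i = i+1 by omega]
      field_simp
    have := congrArg Polynomial.C hsc
    simp only [map_mul, map_pow] at this ⊢
    linear_combination (Wp ς (k+b-(i+1))) * this
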